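/- arXiv:2206.01499 — 3 statements merged into one kernel-verified Lean document; each statement's English description precedes it below -/
import Mathlib

section
/- Let ι be a finite index type, and for each l : ι let S_l be a finite type and W_l a dual unitary gate on S_l. Define the blocked gate W : Matrix ((Π l, S_l) × (Π l, S_l)) ((Π l, S_l) × (Π l, S_l)) ℂ by W[(f,g),(f',g')] = ∏_l W_l[(f l, g l),(f' l, g' l)]. Then W is dual unitary, i.e. both W and its reshuffle W̃ are unitary. -/
open Matrix

/-- A matrix is unitary if it is inverted by its conjugate transpose on both sides. -/
def IsUnitary {n : Type*} [Fintype n] [DecidableEq n] (M : Matrix n n ℂ) : Prop :=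
  M * Mᴴ = 1 ∧ Mᴴ * M = 1

/-- Reshuffle of a gate on `S`: `W̃[(b,b'),(a,a')] = W[(a,b),(a',b')]`. -/
def gateReshuffle {S : Type*} (W : Matrix (S × S) (S × S) ℂ) : Matrix (S × S) (S × S) ℂ :=
  Matrix.of fun r c => W (c.1, r.1) (c.2, r.2)

/-- A gate on `S` is dual unitary if it and its reshuffle are unitary. -/
def DualUnitary {S : Type*} [Fintype S] [DecidableEq S] (W : Matrix (S × S) (S × S) ℂ) : Prop :=
  IsUnitary W ∧ IsUnitary (gateReshuffle W)

section Aux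

variable {ι : Type*} [Fintype ι] [DecidableEq ι]
    {S : ι → Type*} [∀ l, Fintype (S l)] [∀ l, DecidableEq (S l)]

/-- The blocked gate built from a family of gates. -/
def blk (M : ∀ l, Matrix (S l × S l) (S l × S l) ℂ) :
    Matrix ((∀ l, S l) × (∀ l, S l)) ((∀ l, S l) × (∀ l, S l)) ℂ :=
  Matrix.of fun p q => ∏ l, M l (p.1 l, p.2 l) (q.1 l, q.2 l)

def pairEquiv : ((∀ l, S l) × (∀ l, S l)) ≃ (∀ l, S l × S l) where
  toFun p := fun l => (p.1 l, p.2 l)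
  invFun f := (fun l => (f l).1, fun l => (f l).2)
  left_inv p := rfl
  right_inv f := rfl

lemma blk_mul (M N : ∀ l, Matrix (S l × S l) (S l × S l) ℂ) :
    blk M * blk N = blk (fun l => M l * N l) := by
  ext p q
  simp only [blk, Matrix.mul_apply, Matrix.of_apply]
  rw [← Equiv.sum_comp (pairEquiv (S := S)).symm]
  have key : ∀ f : ∀ l, S l × S l,
      (∏ l, M l (p.1 l, p.2 l) (((pairEquiv (S := S)).symm f).1 l,
          ((pairEquiv (S := S)).symm f).2 l)) *
      ∏ l, N l (((pairEquiv (S := S)).symm f).1 l,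
          ((pairEquiv (S := S)).symm f).2 l) (q.1 l, q.2 l)
      = ∏ l, (M l (p.1 l, p.2 l) (f l) * N l (f l) (q.1 l, q.2 l)) := by
    intro f
    simp [pairEquiv, ← Finset.prod_mul_distrib]
  simp only [key]
  exact (Fintype.prod_sum fun l y => M l (p.1 l, p.2 l) y * N l y (q.1 l, q.2 l)).symm

lemma blk_one : blk (fun l : ι => (1 : Matrix (S l × S l) (S l × S l) ℂ)) = 1 := by
  ext p q
  simp only [blk, Matrix.of_apply, Matrix.one_apply]
  by_cases h : p = q
  · subst h; simp
  · rw [if_neg h]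
    have : ∃ l, (p.1 l, p.2 l) ≠ (q.1 l, q.2 l) := by
      by_contra hc
      push_neg at hc
      exact h (Prod.ext (funext fun l => congrArg Prod.fst (hc l))
        (funext fun l => congrArg Prod.snd (hc l)))
    obtain ⟨l, hl⟩ := this
    exact Finset.prod_eq_zero (Finset.mem_univ l) (by rw [if_neg hl])

lemma blk_conjTranspose (M : ∀ l, Matrix (S l × S l) (S l × S l) ℂ) :
    (blk M)ᴴ = blk (fun l => (M l)ᴴ) := by
  ext p q
  simp [blk, Matrix.conjTranspose_apply]

lemma reshuffle_blk (M : ∀ l, Matrix (S l × S l) (S l × S l) ℂ) :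
    gateReshuffle (blk M) = blk (fun l => gateReshuffle (M l)) := rfl

lemma blk_isUnitary (M : ∀ l, Matrix (S l × S l) (S l × S l) ℂ)
    (h : ∀ l, IsUnitary (M l)) : IsUnitary (blk M) := by
  have h1 : (fun l => M l * (M l)ᴴ) =
      fun l => (1 : Matrix (S l × S l) (S l × S l) ℂ) := funext fun l => (h l).1
  have h2 : (fun l => (M l)ᴴ * M l) =
      fun l => (1 : Matrix (S l × S l) (S l × S l) ℂ) := funext fun l => (h l).2
  constructor
  · rw [blk_conjTranspose, blk_mul, h1, blk_one]
  · rw [blk_conjTranspose, blk_mul, h2, blk_one]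

end Aux

/-- Blocking a family of dual unitary gates yields a dual unitary gate. -/
theorem blocked_dualUnitary {ι : Type*} [Fintype ι] [DecidableEq ι]
    {S : ι → Type*} [∀ l, Fintype (S l)] [∀ l, DecidableEq (S l)]
    (W : ∀ l, Matrix (S l × S l) (S l × S l) ℂ)
    (hW : ∀ l, DualUnitary (W l)) :
    DualUnitary (Matrix.of fun (p q : (∀ l, S l) × (∀ l, S l)) =>
      ∏ l, W l (p.1 l, p.2 l) (q.1 l, q.2 l)) := by
  show DualUnitary (blk W)
  refine ⟨blk_isUnitary W fun l => (hW l).1, ?_⟩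
  rw [reshuffle_blk]
  exact blk_isUnitary _ fun l => (hW l).2
end

section
/- Let D and D' be two-site gates with D' unitary, and let U be the cross plaquette gate built from D and D'. Then the plaquette map at site (1,1) reduces to the one-dimensional single-site map of D: for every a : Matrix (Fin d) (Fin d) ℂ, M_{(1,1)}(a) = ℳ₋ᴰ(a). -/
open Matrix

/-- Index type of a four-site gate, legs ordered by the plaquette sites
`(0,0), (1,0), (0,1), (1,1)`. -/
abbrev FourIdx (d : ℕ) := Fin d × Fin d × Fin d × Fin d

/-- Component of a four-site index at the plaquette site `z ∈ {0,1} × {0,1}`. -/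
def comp4 {d : ℕ} (z : Fin 2 × Fin 2) (a : FourIdx d) : Fin d :=
  if z = (0, 0) then a.1
  else if z = (1, 0) then a.2.1
  else if z = (0, 1) then a.2.2.1
  else a.2.2.2

/-- The plaquette site opposite to `z`: `z̄ = (1,1) − z`. -/
def opp (z : Fin 2 × Fin 2) : Fin 2 × Fin 2 := (1 - z.1, 1 - z.2)

/-- The four-site operator acting as `a` on the leg of site `z` and as the identity
on the other three legs. -/
def siteOp4 {d : ℕ} (z : Fin 2 × Fin 2) (a : Matrix (Fin d) (Fin d) ℂ) :
    Matrix (FourIdx d) (FourIdx d) ℂ :=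
  Matrix.of fun p q =>
    (if ∀ w : Fin 2 × Fin 2, w ≠ z → comp4 w p = comp4 w q then 1 else 0) *
      a (comp4 z p) (comp4 z q)

/-- The map `M_z(a) = (1/d³) · Tr_{p \ z̄} [Uᴴ a_z U]`: partial trace over the
three legs other than `z̄` of the conjugation of `a_z` by `U`. -/
noncomputable def Mmap {d : ℕ} (U : Matrix (FourIdx d) (FourIdx d) ℂ) (z : Fin 2 × Fin 2)
    (a : Matrix (Fin d) (Fin d) ℂ) : Matrix (Fin d) (Fin d) ℂ :=
  Matrix.of fun i j =>
    (1 / (d : ℂ) ^ 3) * ∑ p : FourIdx d, ∑ q : FourIdx d,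
      if comp4 (opp z) p = i ∧ comp4 (opp z) q = j ∧
          (∀ w : Fin 2 × Fin 2, w ≠ opp z → comp4 w p = comp4 w q)
        then (Uᴴ * siteOp4 z a * U) p q else 0

/-- Index type of a two-site gate. -/
abbrev TwoIdx (d : ℕ) := Fin d × Fin d

/-- The cross plaquette gate: `D` joins the opposite plaquette sites `(0,0),(1,1)`
and `D'` joins `(1,0),(0,1)`. -/
def cross {d : ℕ} (D D' : Matrix (TwoIdx d) (TwoIdx d) ℂ) :
    Matrix (FourIdx d) (FourIdx d) ℂ :=
  Matrix.of fun a b =>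
    D (a.1, a.2.2.2) (b.1, b.2.2.2) * D' (a.2.1, a.2.2.1) (b.2.1, b.2.2.1)

/-- The single-site map `ℳ₋ᴰ` of a two-site gate `D`:
`ℳ₋ᴰ(a)[i,j] = (1/d) ∑_k (Dᴴ (1 ⊗ a) D)[(i,k),(j,k)]`. -/
noncomputable def Mminus {d : ℕ} (D : Matrix (TwoIdx d) (TwoIdx d) ℂ)
    (a : Matrix (Fin d) (Fin d) ℂ) : Matrix (Fin d) (Fin d) ℂ :=
  Matrix.of fun i j =>
    (1 / (d : ℂ)) * ∑ k : Fin d,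
      (Dᴴ * (Matrix.of fun p q : TwoIdx d =>
          (if p.1 = q.1 then (1 : ℂ) else 0) * a p.2 q.2) * D) (i, k) (j, k)


section Aux

lemma forall_ne_oo {d : ℕ} (p q : FourIdx d) :
    (∀ w : Fin 2 × Fin 2, w ≠ ((0:Fin 2),(0:Fin 2)) → comp4 w p = comp4 w q) ↔ p.2 = q.2 := by
  constructor
  · intro h
    have h1 := h (1,0) (by decide)
    have h2 := h (0,1) (by decide)
    have h3 := h (1,1) (by decide)
    simp [comp4] at h1 h2 h3
    exact Prod.ext h1 (Prod.ext h2 h3)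
  · intro h w hw
    fin_cases w <;> simp_all [comp4]

lemma forall_ne_ii {d : ℕ} (p q : FourIdx d) :
    (∀ w : Fin 2 × Fin 2, w ≠ ((1:Fin 2),(1:Fin 2)) → comp4 w p = comp4 w q) ↔
      p.1 = q.1 ∧ p.2.1 = q.2.1 ∧ p.2.2.1 = q.2.2.1 := by
  constructor
  · intro h
    have h1 := h (0,0) (by decide)
    have h2 := h (1,0) (by decide)
    have h3 := h (0,1) (by decide)
    simp [comp4] at h1 h2 h3
    exact ⟨h1, h2, h3⟩
  · intro h w hw
    fin_cases w <;> simp_all [comp4]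

lemma comp4_ii {d : ℕ} (a : FourIdx d) : comp4 ((1:Fin 2),(1:Fin 2)) a = a.2.2.2 := rfl

lemma comp4_oo {d : ℕ} (a : FourIdx d) : comp4 ((0:Fin 2),(0:Fin 2)) a = a.1 := rfl

lemma key {d : ℕ} (D D' : Matrix (TwoIdx d) (TwoIdx d) ℂ)
    (a : Matrix (Fin d) (Fin d) ℂ) (p q : FourIdx d) :
    ((cross D D')ᴴ * siteOp4 (1,1) a * cross D D') p q =
      (Dᴴ * (Matrix.of fun u v : TwoIdx d => (if u.1 = v.1 then (1:ℂ) else 0) * a u.2 v.2) * D)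
        (p.1, p.2.2.2) (q.1, q.2.2.2) *
      (D'ᴴ * D') (p.2.1, p.2.2.1) (q.2.1, q.2.2.1) := by
  simp only [Matrix.mul_apply, Matrix.conjTranspose_apply, cross, siteOp4, Matrix.of_apply,
    forall_ne_ii, comp4_ii]
  simp only [Fintype.sum_prod_type, ite_and, mul_ite, mul_zero, ite_mul, zero_mul,
    Finset.sum_ite_irrel, Finset.sum_const_zero,
    Finset.sum_ite_eq, Finset.sum_ite_eq', Finset.mem_univ, if_true, star_mul', one_mul]
  simp only [Finset.sum_mul, Finset.mul_sum]
  rw [Finset.sum_comm]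
  refine Finset.sum_congr rfl fun x1 _ => ?_
  rw [Finset.sum_comm]
  refine Finset.sum_congr rfl fun x2 _ => ?_
  refine Finset.sum_congr rfl fun x _ => ?_
  refine Finset.sum_congr rfl fun x3 _ => ?_
  refine Finset.sum_congr rfl fun i _ => ?_
  ring

end Aux

/-- For the cross plaquette gate with `D'` unitary, the plaquette map at site `(1,1)`
reduces to the one-dimensional single-site map of `D`. -/
theorem Mmap_cross_eq_Mminus (d : ℕ) (hd : 1 ≤ d)
    (D D' : Matrix (TwoIdx d) (TwoIdx d) ℂ) (hD' : IsUnitary D')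
    (a : Matrix (Fin d) (Fin d) ℂ) :
    Mmap (cross D D') (1, 1) a = Mminus D a := by
  have hd0 : (d : ℂ) ≠ 0 := Nat.cast_ne_zero.2 (by omega)
  ext i j
  have hopp : opp ((1:Fin 2),(1:Fin 2)) = ((0:Fin 2),(0:Fin 2)) := rfl
  have hE : ∀ p q : FourIdx d,
      ((cross D D')ᴴ * siteOp4 (1,1) a * cross D D') p q =
        (Dᴴ * (Matrix.of fun u v : TwoIdx d =>
            (if u.1 = v.1 then (1:ℂ) else 0) * a u.2 v.2) * D)
          (p.1, p.2.2.2) (q.1, q.2.2.2) *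
        (if (p.2.1, p.2.2.1) = ((q.2.1, q.2.2.1) : TwoIdx d) then 1 else 0) := by
    intro p q
    rw [key D D' a p q, hD'.2, Matrix.one_apply]
  simp only [Mmap, Mminus, Matrix.of_apply, hopp, comp4_oo, forall_ne_oo, hE]
  simp only [Fintype.sum_prod_type, ite_and, Prod.mk.injEq, Prod.ext_iff, mul_ite, mul_one,
    mul_zero, ite_mul, zero_mul, Finset.sum_ite_irrel, Finset.sum_const_zero,
    Finset.sum_ite_eq, Finset.sum_ite_eq', Finset.mem_univ, if_true, and_self, if_pos]
  simp only [Finset.sum_const, Finset.card_univ, Fintype.card_fin, nsmul_eq_mul]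
  field_simp
end

section
/- Let H₁, H₂, V₁, V₂ be two-site gates with V₁ and H₂ unitary, and let U = V * H be the layered plaquette gate built from them. Then the plaquette map at site (1,1) is the composition of two one-dimensional single-site maps: for every a : Matrix (Fin d) (Fin d) ℂ, M_{(1,1)}(a) = ℳ₋^{H₁}(ℳ₋^{V₂}(a)). -/
open Matrix

/-- The layered plaquette gate `U = V * H` built from horizontal gates `H₁, H₂`
and vertical gates `V₁, V₂`. -/
noncomputable def layered {d : ℕ} (H1 H2 V1 V2 : Matrix (TwoIdx d) (TwoIdx d) ℂ) :
    Matrix (FourIdx d) (FourIdx d) ℂ :=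
  (Matrix.of fun a b : FourIdx d =>
      V1 (a.1, a.2.2.1) (b.1, b.2.2.1) * V2 (a.2.1, a.2.2.2) (b.2.1, b.2.2.2)) *
  (Matrix.of fun a b : FourIdx d =>
      H1 (a.1, a.2.1) (b.1, b.2.1) * H2 (a.2.2.1, a.2.2.2) (b.2.2.1, b.2.2.2))

/-! ### Auxiliary machinery for the proof -/

@[simp] lemma comp4_00 {d : ℕ} (a : FourIdx d) : comp4 (0,0) a = a.1 := rfl
@[simp] lemma comp4_10 {d : ℕ} (a : FourIdx d) : comp4 (1,0) a = a.2.1 := rfl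
@[simp] lemma comp4_01 {d : ℕ} (a : FourIdx d) : comp4 (0,1) a = a.2.2.1 := rfl
@[simp] lemma comp4_11 {d : ℕ} (a : FourIdx d) : comp4 (1,1) a = a.2.2.2 := rfl
@[simp] lemma comp4_zero {d : ℕ} (a : FourIdx d) : comp4 0 a = a.1 := rfl
@[simp] lemma comp4_one {d : ℕ} (a : FourIdx d) : comp4 1 a = a.2.2.2 := rfl

lemma four_cases (w : Fin 2 × Fin 2) : w = (0,0) ∨ w = (1,0) ∨ w = (0,1) ∨ w = (1,1) := by
  revert w; decide

lemma forall_ne00 {d : ℕ} (p q : FourIdx d) :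
    (∀ w : Fin 2 × Fin 2, w ≠ (0,0) → comp4 w p = comp4 w q) ↔
      (p.2.1 = q.2.1 ∧ p.2.2.1 = q.2.2.1 ∧ p.2.2.2 = q.2.2.2) := by
  constructor
  · intro h
    exact ⟨h (1,0) (by decide), h (0,1) (by decide), h (1,1) (by decide)⟩
  · rintro ⟨h1, h2, h3⟩ w hw
    rcases four_cases w with h | h | h | h <;> subst h <;> simp_all

lemma forall_ne11 {d : ℕ} (p q : FourIdx d) :
    (∀ w : Fin 2 × Fin 2, w ≠ (1,1) → comp4 w p = comp4 w q) ↔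
      (p.1 = q.1 ∧ p.2.1 = q.2.1 ∧ p.2.2.1 = q.2.2.1) := by
  constructor
  · intro h
    exact ⟨h (0,0) (by decide), h (1,0) (by decide), h (0,1) (by decide)⟩
  · rintro ⟨h1, h2, h3⟩ w hw
    rcases four_cases w with h | h | h | h <;> subst h <;> simp_all

lemma trace_collapse {d : ℕ} (X : Matrix (FourIdx d) (FourIdx d) ℂ) (i j : Fin d) :
    (∑ p : FourIdx d, ∑ q : FourIdx d,
      if p.1 = i ∧ q.1 = j ∧ (p.2.1 = q.2.1 ∧ p.2.2.1 = q.2.2.1 ∧ p.2.2.2 = q.2.2.2)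
        then X p q else 0) =
    ∑ k2 : Fin d, ∑ k3 : Fin d, ∑ k4 : Fin d, X (i,k2,k3,k4) (j,k2,k3,k4) := by
  simp only [Fintype.sum_prod_type, ite_and, Finset.sum_ite_eq, Finset.sum_ite_eq',
    Finset.mem_univ, if_true, Finset.sum_ite_irrel, Finset.sum_const_zero]

lemma siteOp4_apply_11 {d : ℕ} (a : Matrix (Fin d) (Fin d) ℂ) (p q : FourIdx d) :
    siteOp4 (1,1) a p q =
      (if p.1 = q.1 ∧ p.2.1 = q.2.1 ∧ p.2.2.1 = q.2.2.1 then 1 else 0) * a p.2.2.2 q.2.2.2 := by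
  simp only [siteOp4, Matrix.of_apply, forall_ne11, comp4_11]

lemma Mmap11_apply {d : ℕ} (U : Matrix (FourIdx d) (FourIdx d) ℂ)
    (a : Matrix (Fin d) (Fin d) ℂ) (i j : Fin d) :
    Mmap U (1,1) a i j = (1 / (d : ℂ) ^ 3) *
      ∑ k2 : Fin d, ∑ k3 : Fin d, ∑ k4 : Fin d,
        (Uᴴ * siteOp4 (1,1) a * U) (i,k2,k3,k4) (j,k2,k3,k4) := by
  have hopp : opp (1,1) = (0,0) := by decide
  simp only [Mmap, Matrix.of_apply, hopp, comp4_00, forall_ne00]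
  rw [trace_collapse]

def oneT {d : ℕ} (a : Matrix (Fin d) (Fin d) ℂ) : Matrix (TwoIdx d) (TwoIdx d) ℂ :=
  Matrix.of fun p q => (if p.1 = q.1 then (1 : ℂ) else 0) * a p.2 q.2

def Vmat {d : ℕ} (V1 V2 : Matrix (TwoIdx d) (TwoIdx d) ℂ) : Matrix (FourIdx d) (FourIdx d) ℂ :=
  Matrix.of fun a b : FourIdx d =>
      V1 (a.1, a.2.2.1) (b.1, b.2.2.1) * V2 (a.2.1, a.2.2.2) (b.2.1, b.2.2.2)

def Hmat {d : ℕ} (H1 H2 : Matrix (TwoIdx d) (TwoIdx d) ℂ) : Matrix (FourIdx d) (FourIdx d) ℂ :=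
  Matrix.of fun a b : FourIdx d =>
      H1 (a.1, a.2.1) (b.1, b.2.1) * H2 (a.2.2.1, a.2.2.2) (b.2.2.1, b.2.2.2)

def CmatOf {d : ℕ} (B : Matrix (TwoIdx d) (TwoIdx d) ℂ) : Matrix (FourIdx d) (FourIdx d) ℂ :=
  Matrix.of fun p q => (if p.1 = q.1 then (1:ℂ) else 0) *
    ((if p.2.2.1 = q.2.2.1 then (1:ℂ) else 0) * B (p.2.1, p.2.2.2) (q.2.1, q.2.2.2))

lemma sum_perm5 {M : Type*} [AddCommMonoid M] {α : Type*} [Fintype α]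
    (f : α → α → α → α → α → M) :
    (∑ a, ∑ b, ∑ c, ∑ d, ∑ e, f a b c d e) = ∑ a, ∑ b, ∑ c, ∑ d, ∑ e, f d a e b c := by
  have hL : (∑ t : α × α × α × α × α, f t.1 t.2.1 t.2.2.1 t.2.2.2.1 t.2.2.2.2) =
      ∑ a, ∑ b, ∑ c, ∑ d, ∑ e, f a b c d e := by
    simp [Fintype.sum_prod_type]
  have hR : (∑ t : α × α × α × α × α, f t.2.2.2.1 t.1 t.2.2.2.2 t.2.1 t.2.2.1) =
      ∑ a, ∑ b, ∑ c, ∑ d, ∑ e, f d a e b c := by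
    simp [Fintype.sum_prod_type]
  rw [← hL, ← hR]
  exact Fintype.sum_equiv ⟨fun t => (t.2.1, t.2.2.2.1, t.2.2.2.2, t.1, t.2.2.1),
    fun u => (u.2.2.2.1, u.1, u.2.2.2.2, u.2.1, u.2.2.1), fun t => rfl, fun u => rfl⟩ _ _
    (fun t => rfl)

set_option maxHeartbeats 1600000 in
lemma sum_perm9 {M : Type*} [AddCommMonoid M] {α : Type*} [Fintype α]
    (f : α → α → α → α → α → α → α → α → α → M) :
    (∑ a1, ∑ a2, ∑ a3, ∑ a4, ∑ a5, ∑ a6, ∑ a7, ∑ a8, ∑ a9, f a1 a2 a3 a4 a5 a6 a7 a8 a9) =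
    ∑ b1, ∑ b2, ∑ b3, ∑ b4, ∑ b5, ∑ b6, ∑ b7, ∑ b8, ∑ b9, f b1 b8 b9 b2 b4 b7 b6 b3 b5 := by
  have hL : (∑ t : α × α × α × α × α × α × α × α × α,
      f t.1 t.2.1 t.2.2.1 t.2.2.2.1 t.2.2.2.2.1 t.2.2.2.2.2.1 t.2.2.2.2.2.2.1
        t.2.2.2.2.2.2.2.1 t.2.2.2.2.2.2.2.2) =
      ∑ a1, ∑ a2, ∑ a3, ∑ a4, ∑ a5, ∑ a6, ∑ a7, ∑ a8, ∑ a9, f a1 a2 a3 a4 a5 a6 a7 a8 a9 := by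
    simp only [Fintype.sum_prod_type]
  have hR : (∑ t : α × α × α × α × α × α × α × α × α,
      f t.1 t.2.2.2.2.2.2.2.1 t.2.2.2.2.2.2.2.2 t.2.1 t.2.2.2.1 t.2.2.2.2.2.2.1
        t.2.2.2.2.2.1 t.2.2.1 t.2.2.2.2.1) =
      ∑ b1, ∑ b2, ∑ b3, ∑ b4, ∑ b5, ∑ b6, ∑ b7, ∑ b8, ∑ b9, f b1 b8 b9 b2 b4 b7 b6 b3 b5 := by
    simp only [Fintype.sum_prod_type]
  rw [← hL, ← hR]
  exact Fintype.sum_equiv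
    ⟨fun t => (t.1, t.2.2.2.1, t.2.2.2.2.2.2.2.1, t.2.2.2.2.1, t.2.2.2.2.2.2.2.2,
        t.2.2.2.2.2.2.1, t.2.2.2.2.2.1, t.2.1, t.2.2.1),
     fun u => (u.1, u.2.2.2.2.2.2.2.1, u.2.2.2.2.2.2.2.2, u.2.1, u.2.2.2.1,
        u.2.2.2.2.2.2.1, u.2.2.2.2.2.1, u.2.2.1, u.2.2.2.2.1),
     fun t => rfl, fun u => rfl⟩ _ _ (fun t => rfl)

lemma stepA {d : ℕ} (V1 V2 : Matrix (TwoIdx d) (TwoIdx d) ℂ) (hV1 : V1ᴴ * V1 = 1)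
    (a : Matrix (Fin d) (Fin d) ℂ) (p q : FourIdx d) :
    ((Vmat V1 V2)ᴴ * siteOp4 (1,1) a * Vmat V1 V2) p q =
      (1 : Matrix (TwoIdx d) (TwoIdx d) ℂ) (p.1, p.2.2.1) (q.1, q.2.2.1) *
        (V2ᴴ * oneT a * V2) (p.2.1, p.2.2.2) (q.2.1, q.2.2.2) := by
  rw [← hV1]
  simp only [mul_apply, conjTranspose_apply, Vmat, oneT, siteOp4_apply_11, Matrix.of_apply,
    Fintype.sum_prod_type, ite_and, mul_ite, ite_mul, mul_zero, zero_mul, mul_one, one_mul,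
    Finset.sum_ite_eq, Finset.sum_ite_eq', Finset.mem_univ, if_true,
    Finset.sum_ite_irrel, Finset.sum_const_zero, Finset.mul_sum, Finset.sum_mul]
  rw [sum_perm5]
  refine Finset.sum_congr rfl fun a _ => Finset.sum_congr rfl fun b _ =>
    Finset.sum_congr rfl fun c _ => Finset.sum_congr rfl fun e _ =>
    Finset.sum_congr rfl fun g _ => by simp only [star_mul']; ring

lemma stepA' {d : ℕ} (V1 V2 : Matrix (TwoIdx d) (TwoIdx d) ℂ) (hV1 : V1ᴴ * V1 = 1)
    (a : Matrix (Fin d) (Fin d) ℂ) :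
    (Vmat V1 V2)ᴴ * siteOp4 (1,1) a * Vmat V1 V2 = CmatOf (V2ᴴ * oneT a * V2) := by
  ext p q
  rw [stepA V1 V2 hV1 a p q]
  simp only [CmatOf, Matrix.of_apply, one_apply, Prod.mk.injEq, ite_and, ite_mul, mul_ite,
    zero_mul, mul_zero, one_mul, mul_assoc]
  by_cases h1 : p.1 = q.1 <;> by_cases h2 : p.2.2.1 = q.2.2.1 <;> simp [h1, h2]

lemma stepB {d : ℕ} (H1 H2 : Matrix (TwoIdx d) (TwoIdx d) ℂ) (hH2 : H2 * H2ᴴ = 1)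
    (B : Matrix (TwoIdx d) (TwoIdx d) ℂ) (i j : Fin d) :
    (∑ k2 : Fin d, ∑ k3 : Fin d, ∑ k4 : Fin d,
      ((Hmat H1 H2)ᴴ * CmatOf B * Hmat H1 H2) (i,k2,k3,k4) (j,k2,k3,k4)) =
    (d : ℂ) * ∑ k : Fin d, ∑ r1 : Fin d, ∑ r2 : Fin d, ∑ s2 : Fin d, ∑ m : Fin d,
      star (H1 (r1, r2) (i, k)) * B (r2, m) (s2, m) * H1 (r1, s2) (j, k) := by
  have key : ∀ b5 b6 b7 : Fin d,
      (∑ b8 : Fin d, ∑ b9 : Fin d, star (H2 (b7,b5) (b8,b9)) * H2 (b7,b6) (b8,b9)) =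
        if b6 = b5 then (1:ℂ) else 0 := by
    intro b5 b6 b7
    have h : (H2 * H2ᴴ) (b7,b6) (b7,b5) = (1 : Matrix (TwoIdx d) (TwoIdx d) ℂ) (b7,b6) (b7,b5) := by
      rw [hH2]
    simp only [mul_apply, conjTranspose_apply, Fintype.sum_prod_type, one_apply,
      Prod.mk.injEq, true_and] at h
    rw [← h]
    exact Finset.sum_congr rfl fun b8 _ => Finset.sum_congr rfl fun b9 _ => by ring
  simp only [mul_apply, conjTranspose_apply, Hmat, CmatOf, Matrix.of_apply,
    Fintype.sum_prod_type, ite_and, mul_ite, ite_mul, mul_zero, zero_mul, mul_one, one_mul,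
    Finset.sum_ite_eq, Finset.sum_ite_eq', Finset.mem_univ, if_true,
    Finset.sum_ite_irrel, Finset.sum_const_zero, Finset.mul_sum, Finset.sum_mul, star_mul']
  rw [sum_perm9 (fun a1 a2 a3 a4 a5 a6 a7 a8 a9 =>
    star (H1 (a4, a8) (i, a1)) * star (H2 (a6, a9) (a2, a3)) * B (a8, a9) (a5, a7) *
      (H1 (a4, a5) (j, a1) * H2 (a6, a7) (a2, a3)))]
  trans (∑ b1 : Fin d, ∑ b2 : Fin d, ∑ b3 : Fin d, ∑ b4 : Fin d, ∑ b5 : Fin d, ∑ b6 : Fin d,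
      ∑ b7 : Fin d,
      (star (H1 (b2, b3) (i, b1)) * B (b3, b5) (b4, b6) * H1 (b2, b4) (j, b1)) *
        ∑ b8 : Fin d, ∑ b9 : Fin d, star (H2 (b7, b5) (b8, b9)) * H2 (b7, b6) (b8, b9))
  · simp only [Finset.mul_sum]
    refine Finset.sum_congr rfl fun b1 _ => Finset.sum_congr rfl fun b2 _ =>
      Finset.sum_congr rfl fun b3 _ => Finset.sum_congr rfl fun b4 _ =>
      Finset.sum_congr rfl fun b5 _ => Finset.sum_congr rfl fun b6 _ =>
      Finset.sum_congr rfl fun b7 _ => Finset.sum_congr rfl fun b8 _ =>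
      Finset.sum_congr rfl fun b9 _ => by ring
  · simp only [key, mul_ite, mul_one, mul_zero, Finset.sum_const, Finset.card_univ,
      Fintype.card_fin, nsmul_eq_mul, Finset.sum_ite_eq, Finset.sum_ite_eq',
      Finset.mem_univ, if_true, Finset.mul_sum]

lemma Mminus_eq {d : ℕ} (D : Matrix (TwoIdx d) (TwoIdx d) ℂ) (a : Matrix (Fin d) (Fin d) ℂ) :
    Mminus D a = Matrix.of fun i j => (1 / (d : ℂ)) * ∑ k : Fin d,
      (Dᴴ * oneT a * D) (i, k) (j, k) := rfl

lemma rhs_expand {d : ℕ} (H1 V2 : Matrix (TwoIdx d) (TwoIdx d) ℂ)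
    (a : Matrix (Fin d) (Fin d) ℂ) (i j : Fin d) :
    Mminus H1 (Mminus V2 a) i j = 1/(d:ℂ)^2 *
      ∑ k : Fin d, ∑ r1 : Fin d, ∑ r2 : Fin d, ∑ s2 : Fin d, ∑ m : Fin d,
        star (H1 (r1,r2) (i,k)) * (V2ᴴ * oneT a * V2) (r2,m) (s2,m) * H1 (r1,s2) (j,k) := by
  simp only [Mminus_eq, Matrix.of_apply, mul_apply, conjTranspose_apply, oneT,
    Fintype.sum_prod_type, ite_mul, mul_ite, mul_zero, zero_mul, one_mul, mul_one,
    Finset.sum_ite_eq, Finset.sum_ite_eq', Finset.mem_univ, if_true,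
    Finset.sum_ite_irrel, Finset.sum_const_zero, Finset.mul_sum, Finset.sum_mul]
  refine Finset.sum_congr rfl fun x _ => Finset.sum_congr rfl fun x1 _ => ?_
  rw [Finset.sum_comm]
  refine Finset.sum_congr rfl fun x2 _ => Finset.sum_congr rfl fun x3 _ =>
    Finset.sum_congr rfl fun x4 _ => Finset.sum_congr rfl fun x5 _ =>
    Finset.sum_congr rfl fun x6 _ => Finset.sum_congr rfl fun m _ => by ring

/-- For the layered plaquette gate with `V₁` and `H₂` unitary, the plaquette map at site
`(1,1)` is the composition of the one-dimensional single-site maps of `H₁` and `V₂`. -/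
theorem Mmap_layered_eq_Mminus_comp (d : ℕ) (hd : 1 ≤ d)
    (H1 H2 V1 V2 : Matrix (TwoIdx d) (TwoIdx d) ℂ)
    (hV1 : IsUnitary V1) (hH2 : IsUnitary H2)
    (a : Matrix (Fin d) (Fin d) ℂ) :
    Mmap (layered H1 H2 V1 V2) (1, 1) a = Mminus H1 (Mminus V2 a) := by
  obtain ⟨hV1l, hV1r⟩ := hV1
  obtain ⟨hH2l, hH2r⟩ := hH2
  have hd0 : (d : ℂ) ≠ 0 := Nat.cast_ne_zero.mpr (by omega)
  ext i j
  rw [Mmap11_apply]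
  have hU : (layered H1 H2 V1 V2)ᴴ * siteOp4 (1,1) a * layered H1 H2 V1 V2
      = (Hmat H1 H2)ᴴ * CmatOf (V2ᴴ * oneT a * V2) * Hmat H1 H2 := by
    have h0 : layered H1 H2 V1 V2 = Vmat V1 V2 * Hmat H1 H2 := rfl
    rw [h0, ← stepA' V1 V2 hV1r a]
    simp only [conjTranspose_mul, Matrix.mul_assoc]
  rw [hU, stepB H1 H2 hH2l _ i j, rhs_expand]
  field_simp
end
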